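/- arXiv:2407.07654 — 3 statements merged into one kernel-verified Lean document; each statement's English description precedes it below -/
import Mathlib

section
/- Let n > 3 be an integer and b̃ ∈ ℝ be such that T̃ₙ(2, b̃) is invertible. Then for every row index 1 ≤ i ≤ n, the i-th row sum of T̃ₙ(2, b̃)⁻¹ (the sum over j = 1,…,n of its (i,j)-entries) satisfies n/(2(b̃−1)) ≤ rowsumᵢ ≤ (n+1)²/8 − n(b̃−2)/(2(b̃−1)). -/
/-! The row sums of `T⁻¹` are the entries of the solution `x` of `T x = 𝟙`. For `b = 2` the interior
equations say that `x` has constant second difference `-1`, and the two corner equations fix the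
constant term: `x_j = n / (2 (b̃ - 1)) + j (n - 1 - j) / 2` (0-based `j`). The bounds are then
`0 ≤ j (n - 1 - j) ≤ (n - 1)² / 4`. Invertibility rules out `b̃ = 1`, where `T` kills `𝟙`. -/

open Matrix BigOperators Finset

/-- The symmetric tridiagonal near-Toeplitz matrix with corner diagonal entries `bt`,
interior diagonal entries `b`, and off-diagonal entries `-1` (0-based indices). -/
noncomputable def Ttilde (n : ℕ) (b bt : ℝ) : Matrix (Fin n) (Fin n) ℝ :=
  Matrix.of fun i j =>
    if (i : ℕ) = (j : ℕ) then (if (i : ℕ) = 0 ∨ (i : ℕ) = n - 1 then bt else b)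
    else if (i : ℕ) + 1 = (j : ℕ) ∨ (j : ℕ) + 1 = (i : ℕ) then (-1 : ℝ) else 0

/-- The maximum absolute row sum (operator norm induced by the sup norm). -/
noncomputable def normInf {n : ℕ} (A : Matrix (Fin n) (Fin n) ℝ) : ℝ :=
  ⨆ i : Fin n, ∑ j : Fin n, |A i j|

lemma Ttilde_mulVec_apply (n : ℕ) (b bt : ℝ) (f : ℕ → ℝ) (i : Fin n) :
    (Ttilde n b bt *ᵥ fun j => f j) i =
      (if (i : ℕ) = 0 ∨ (i : ℕ) = n - 1 then bt else b) * f i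
        - (if 0 < (i : ℕ) then f (i - 1) else 0) - (if (i : ℕ) + 1 < n then f (i + 1) else 0) := by
  simp only [mulVec, dotProduct, Ttilde, of_apply]
  set d := if (i : ℕ) = 0 ∨ (i : ℕ) = n - 1 then bt else b
  have hentry : ∀ j : ℕ,
      (if (i : ℕ) = j then d else if (i : ℕ) + 1 = j ∨ j + 1 = (i : ℕ) then (-1 : ℝ) else 0) * f j =
        (if j = i then d * f i else 0)
          - (if 0 < (i : ℕ) then (if j = i - 1 then f (i - 1) else 0) else 0)
          - (if j = i + 1 then f (i + 1) else 0) := by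
    intro j
    split_ifs <;> first | omega | (subst_vars; simp)
  rw [Fin.sum_univ_eq_sum_range (fun j =>
    (if (i : ℕ) = j then d else if (i : ℕ) + 1 = j ∨ j + 1 = (i : ℕ) then (-1 : ℝ) else 0) * f j)]
  simp only [hentry, sum_sub_distrib, sum_ite_eq', sum_ite_irrel, sum_const_zero, mem_range]
  split_ifs <;> first | omega | ring

theorem Matrix.sum_inv_apply_eq_of_mulVec_eq_one {m R : Type*} [Fintype m] [DecidableEq m]
    [CommRing R] {A : Matrix m m R} (hA : IsUnit A) {x : m → R} (hx : A *ᵥ x = 1) (i : m) :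
    ∑ j, A⁻¹ i j = x i := by
  have hdet := (isUnit_iff_isUnit_det A).mp hA
  rw [← one_mulVec x, ← nonsing_inv_mul A hdet, ← mulVec_mulVec, hx]
  simp [mulVec, dotProduct]

lemma ne_one_of_isUnit_Ttilde_two {n : ℕ} (hn : 2 ≤ n) {bt : ℝ} (h : IsUnit (Ttilde n 2 bt)) :
    bt ≠ 1 := by
  rintro rfl
  have hker : Ttilde n 2 1 *ᵥ (fun _ => 1) = 0 := by
    ext i
    rw [Ttilde_mulVec_apply n 2 1 (fun _ => 1) i]
    split_ifs <;> first | omega | norm_num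
  have hdet : (Ttilde n 2 1).det = 0 :=
    exists_mulVec_eq_zero_iff.mp ⟨_, Function.ne_iff.mpr ⟨⟨0, by omega⟩, one_ne_zero⟩, hker⟩
  exact ((isUnit_iff_isUnit_det _).mp h).ne_zero hdet

lemma Ttilde_two_mulVec_quadratic_eq_one {n : ℕ} (hn : 2 ≤ n) {bt : ℝ} (hbt : bt ≠ 1) :
    Ttilde n 2 bt *ᵥ (fun j => n / (2 * (bt - 1)) + (j : ℝ) * (n - 1 - j) / 2) = 1 := by
  have hbt' : bt - 1 ≠ 0 := sub_ne_zero.mpr hbt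
  ext i
  rw [Ttilde_mulVec_apply n 2 bt (fun j => n / (2 * (bt - 1)) + (j : ℝ) * (n - 1 - j) / 2) i,
    Pi.one_apply]
  have hi := i.isLt
  rcases Nat.eq_zero_or_pos (i : ℕ) with h0 | hpos
  · simp only [h0, true_or, if_true, lt_irrefl, if_false, zero_add, show 1 < n by omega]
    push_cast
    field_simp
    ring
  rcases eq_or_ne (i : ℕ) (n - 1) with hlast | hmid
  · simp only [hlast, or_true, if_true, show 0 < n - 1 by omega, show ¬ n - 1 + 1 < n by omega,
      if_false]
    push_cast [Nat.cast_sub (show 1 ≤ n - 1 by omega), Nat.cast_sub (show 1 ≤ n by omega)]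
    field_simp
    ring
  · simp only [hpos.ne', hmid, or_self, if_false, hpos, if_true, show (i : ℕ) + 1 < n by omega]
    push_cast [Nat.cast_sub (show 1 ≤ (i : ℕ) by omega)]
    ring

theorem stmt6 (n : ℕ) (hn : 3 < n) (bt : ℝ) (hinv : IsUnit (Ttilde n 2 bt)) :
    ∀ i : Fin n,
      (n : ℝ) / (2 * (bt - 1)) ≤ ∑ j : Fin n, (Ttilde n 2 bt)⁻¹ i j ∧
      ∑ j : Fin n, (Ttilde n 2 bt)⁻¹ i j ≤
        ((n : ℝ) + 1) ^ 2 / 8 - (n : ℝ) * (bt - 2) / (2 * (bt - 1)) := by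
  intro i
  have hbt := ne_one_of_isUnit_Ttilde_two (by omega) hinv
  rw [sum_inv_apply_eq_of_mulVec_eq_one hinv (Ttilde_two_mulVec_quadratic_eq_one (by omega) hbt)]
  have hi : ((i : ℕ) : ℝ) ≤ n - 1 := by
    rw [le_sub_iff_add_le]
    exact_mod_cast i.isLt
  have hcorner : (n : ℝ) / (2 * (bt - 1)) + n * (bt - 2) / (2 * (bt - 1)) = n / 2 := by
    field_simp [sub_ne_zero.mpr hbt]
    ring
  constructor
  · linarith [mul_nonneg (Nat.cast_nonneg (α := ℝ) i) (sub_nonneg.mpr hi)]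
  · linarith [sq_nonneg (2 * ((i : ℕ) : ℝ) + 1 - n)]
end

section
/- Let n > 3 be an integer and b̃ ≤ 0. Then ‖T̃ₙ(2, b̃)⁻¹‖∞ ≤ max{ (n+1)²/8 + (4 − (2+|b̃|)·n)/(2(1+|b̃|)) , (1/(1+|b̃|)) · ( n/2 + 2/((n−1)(1+|b̃|) − 2) ) }. -/
open Matrix BigOperators Finset

/-!
Write `b̃ = 1 - c` with `c ≥ 1`. The inverse of `Ttilde n 2 (1 - c)` is the Green's function
`G i j = u (min i j) * u (n - 1 - max i j) / (c * (c * (n - 1) - 2))` with `u k = 1 - c k`: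
`u` is affine, so it is annihilated by the interior rows, and it satisfies the boundary condition
`(1 - c) u 0 - u 1 = 0` of the first row; the denominator is the Wronskian of `u` and its reflection.
Since `|u k| = c k - 1` for `k ≥ 1`, every absolute row sum of `G` is explicit: for the two
boundary rows it is the second term of the maximum, and for an interior row `i` it is the first
term minus `(2 i - (n - 1))² / 8`.
-/

/-- `Ttilde n b bt i j = ttildeEntry n b bt i j` holds by definition. -/
noncomputable def ttildeEntry (n : ℕ) (b bt : ℝ) (i j : ℕ) : ℝ :=
  if i = j then (if i = 0 ∨ i = n - 1 then bt else b)
  else if i + 1 = j ∨ j + 1 = i then (-1 : ℝ) else 0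

lemma sum_ttildeEntry_mul {n i : ℕ} (hi : i < n) (b bt : ℝ) (g : ℕ → ℝ) :
    ∑ j ∈ range n, ttildeEntry n b bt i j * g j =
      (if i = 0 ∨ i = n - 1 then bt else b) * g i - (if i + 1 < n then g (i + 1) else 0)
        - (if 0 < i then g (i - 1) else 0) := by
  have hsplit : ∀ j, ttildeEntry n b bt i j * g j =
      (if j = i then (if i = 0 ∨ i = n - 1 then bt else b) * g j else 0)
        - (if j = i + 1 then g j else 0) - (if 0 < i ∧ j = i - 1 then g j else 0) := by
    intro j
    unfold ttildeEntry
    split_ifs <;> first | omega | ring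
  simp only [hsplit, sum_sub_distrib, ite_and, sum_ite_irrel, sum_ite_eq', mem_range,
    sum_const_zero]
  split_ifs <;> first | omega | ring

noncomputable def green (n : ℕ) (c : ℝ) (i j : ℕ) : ℝ :=
  (1 - c * (min i j : ℕ)) * (1 - c * ((n : ℝ) - 1 - (max i j : ℕ))) /
    (c * (c * ((n : ℝ) - 1) - 2))

section green

variable {n : ℕ} {c : ℝ} {i j : ℕ}

lemma green_of_le (h : i ≤ j) :
    green n c i j =
      (1 - c * i) * (1 - c * ((n : ℝ) - 1 - j)) / (c * (c * ((n : ℝ) - 1) - 2)) := by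
  rw [green, min_eq_left h, max_eq_right h]

lemma green_of_ge (h : j ≤ i) :
    green n c i j =
      (1 - c * j) * (1 - c * ((n : ℝ) - 1 - i)) / (c * (c * ((n : ℝ) - 1) - 2)) := by
  rw [green, min_eq_right h, max_eq_left h]

lemma sum_ttildeEntry_mul_green (hn : 2 ≤ n) (hW : c * (c * ((n : ℝ) - 1) - 2) ≠ 0)
    (hi : i < n) (hj : j < n) :
    ∑ k ∈ range n, ttildeEntry n 2 (1 - c) i k * green n c k j = if i = j then 1 else 0 := by
  rw [sum_ttildeEntry_mul hi]
  have hn1 : ((n - 1 : ℕ) : ℝ) = n - 1 := Nat.cast_pred (by omega)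
  obtain ⟨hc, hW'⟩ := mul_ne_zero_iff.mp hW
  rcases lt_trichotomy i j with h | rfl | h
  · rw [green_of_le h.le, green_of_le h, green_of_le (by omega : i - 1 ≤ j), if_neg h.ne,
      if_pos (by omega : i + 1 < n)]
    rcases Nat.eq_zero_or_pos i with rfl | hi0
    · simp only [true_or, if_true, lt_irrefl, if_false]
      push_cast; ring
    · rw [if_neg (by omega), if_pos hi0, Nat.cast_pred hi0]
      push_cast; ring
  · rw [green_of_le le_rfl, green_of_ge (Nat.le_succ i), green_of_le (Nat.sub_le i 1), if_pos rfl]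
    rcases Nat.eq_zero_or_pos i with rfl | hi0
    · simp only [true_or, if_true, lt_irrefl, if_false, if_pos (by omega : 0 + 1 < n)]
      field_simp; push_cast; ring
    rcases eq_or_ne i (n - 1) with rfl | hin
    · rw [if_pos (Or.inr rfl), if_neg (by omega), if_pos hi0, Nat.cast_pred hi0, hn1]
      field_simp; ring
    · rw [if_neg (by omega), if_pos (by omega), if_pos hi0, Nat.cast_pred hi0]
      field_simp; push_cast; ring
  · rw [green_of_ge h.le, green_of_ge (by omega : j ≤ i + 1), green_of_ge (by omega : j ≤ i - 1),
      if_neg h.ne', if_pos (by omega : 0 < i)]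
    rcases eq_or_ne i (n - 1) with rfl | hin
    · rw [if_pos (Or.inr rfl), if_neg (by omega), show n - 1 - 1 = n - 2 by omega,
        Nat.cast_sub hn, hn1]
      push_cast; ring
    · rw [if_neg (by omega), if_pos (by omega), Nat.cast_pred (by omega)]
      push_cast; ring

lemma Ttilde_mul_green (hn : 2 ≤ n) (hW : c * (c * ((n : ℝ) - 1) - 2) ≠ 0) :
    Ttilde n 2 (1 - c) * Matrix.of (fun i j : Fin n => green n c i j) = 1 := by
  ext i k
  rw [mul_apply, one_apply]
  calc ∑ j, Ttilde n 2 (1 - c) i j * green n c j k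
      = ∑ j ∈ range n, ttildeEntry n 2 (1 - c) i j * green n c j k :=
        Fin.sum_univ_eq_sum_range (fun j => ttildeEntry n 2 (1 - c) i j * green n c j k) n
    _ = if (i : ℕ) = k then 1 else 0 := sum_ttildeEntry_mul_green hn hW i.isLt k.isLt
    _ = if i = k then 1 else 0 := by simp only [Fin.val_inj]

lemma sum_range_abs_one_sub_mul (hc : 1 ≤ c) {m : ℕ} (hm : 1 ≤ m) :
    ∑ k ∈ range m, |1 - c * k| = 2 - m + c * m * (m - 1) / 2 := by
  induction m, hm using Nat.le_induction with
  | base => norm_num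
  | succ m hm ih =>
    have : (1 : ℝ) ≤ m := by exact_mod_cast hm
    rw [sum_range_succ, ih, abs_of_nonpos (by nlinarith)]
    push_cast; ring

lemma sum_abs_green (hW : 0 < c * (c * ((n : ℝ) - 1) - 2)) (hi : i < n) :
    ∑ j ∈ range n, |green n c i j| =
      (|1 - c * ((n : ℝ) - 1 - i)| * ∑ k ∈ range i, |1 - c * k|
        + |1 - c * i| * ∑ k ∈ range (n - i), |1 - c * k|) / (c * (c * ((n : ℝ) - 1) - 2)) := by
  rw [range_eq_Ico, ← sum_Ico_consecutive _ (Nat.zero_le i) hi.le, sum_Ico_eq_sum_range _ i n,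
    ← sum_range_reflect _ (n - i), ← range_eq_Ico, add_div, mul_sum, mul_sum, sum_div, sum_div]
  congr 1
  · refine sum_congr rfl fun j hj => ?_
    rw [mem_range] at hj
    rw [green_of_ge hj.le, abs_div, abs_mul, abs_of_pos hW, mul_comm]
  · refine sum_congr rfl fun j hj => ?_
    rw [mem_range] at hj
    have hcast : ((i + (n - i - 1 - j) : ℕ) : ℝ) + j + 1 = n := by
      exact_mod_cast (show i + (n - i - 1 - j) + j + 1 = n by omega)
    rw [green_of_le (by omega), abs_div, abs_mul, abs_of_pos hW,
      show (n : ℝ) - 1 - ((i + (n - i - 1 - j) : ℕ) : ℝ) = j by linarith]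

lemma wronskian_pos (hc : 1 ≤ c) (hcn : 2 < c * ((n : ℝ) - 1)) :
    0 < c * (c * ((n : ℝ) - 1) - 2) :=
  mul_pos (by linarith) (by linarith)

lemma two_le_of_two_lt_mul_sub_one (hc : 1 ≤ c) (hcn : 2 < c * ((n : ℝ) - 1)) : 2 ≤ n := by
  by_contra h
  have : (n : ℝ) ≤ 1 := by exact_mod_cast (by omega : n ≤ 1)
  nlinarith

lemma sum_abs_green_zero (hc : 1 ≤ c) (hcn : 2 < c * ((n : ℝ) - 1)) :
    ∑ j ∈ range n, |green n c 0 j| = 1 / c * ((n : ℝ) / 2 + 2 / (((n : ℝ) - 1) * c - 2)) := by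
  have hn := two_le_of_two_lt_mul_sub_one hc hcn
  rw [sum_abs_green (wronskian_pos hc hcn) (by omega), Nat.sub_zero,
    sum_range_abs_one_sub_mul hc (by omega : 1 ≤ n)]
  have : ((n : ℝ) - 1) * c - 2 ≠ 0 := by linarith
  have : c * ((n : ℝ) - 1) - 2 ≠ 0 := by linarith
  have : c ≠ 0 := by linarith
  simp only [range_zero, sum_empty, Nat.cast_zero, mul_zero, sub_zero, abs_one, one_mul, zero_add]
  field_simp
  ring

lemma sum_abs_green_last (hc : 1 ≤ c) (hcn : 2 < c * ((n : ℝ) - 1)) :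
    ∑ j ∈ range n, |green n c (n - 1) j| =
      1 / c * ((n : ℝ) / 2 + 2 / (((n : ℝ) - 1) * c - 2)) := by
  have hn := two_le_of_two_lt_mul_sub_one hc hcn
  rw [sum_abs_green (wronskian_pos hc hcn) (by omega), show n - (n - 1) = 1 by omega,
    sum_range_abs_one_sub_mul hc (by omega : 1 ≤ n - 1), sum_range_abs_one_sub_mul hc le_rfl,
    Nat.cast_pred (by omega), abs_of_nonpos (by linarith : 1 - c * ((n : ℝ) - 1) ≤ 0)]
  have : ((n : ℝ) - 1) * c - 2 ≠ 0 := by linarith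
  have : c * ((n : ℝ) - 1) - 2 ≠ 0 := by linarith
  have : c ≠ 0 := by linarith
  simp only [sub_self, mul_zero, sub_zero, abs_one]
  field_simp
  ring

lemma sum_abs_green_le_of_interior (hc : 1 ≤ c) (hcn : 2 < c * ((n : ℝ) - 1))
    (hi : 1 ≤ i) (hin : i + 2 ≤ n) :
    ∑ j ∈ range n, |green n c i j| ≤ ((n : ℝ) + 1) ^ 2 / 8 + (4 - (1 + c) * n) / (2 * c) := by
  have hW := wronskian_pos hc hcn
  have hi' : (1 : ℝ) ≤ i := by exact_mod_cast hi
  have hin' : (i : ℝ) + 2 ≤ n := by exact_mod_cast hin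
  rw [sum_abs_green hW (by omega), sum_range_abs_one_sub_mul hc hi,
    sum_range_abs_one_sub_mul hc (by omega), Nat.cast_sub (by omega),
    abs_of_nonpos (by nlinarith : 1 - c * ((n : ℝ) - 1 - i) ≤ 0),
    abs_of_nonpos (by nlinarith : 1 - c * i ≤ 0), div_le_iff₀ hW]
  have hc0 : c ≠ 0 := by linarith
  -- the bound is the interior row sum at the middle row `i = (n - 1) / 2`
  have hgap : (((n : ℝ) + 1) ^ 2 / 8 + (4 - (1 + c) * n) / (2 * c)) * (c * (c * ((n : ℝ) - 1) - 2))
      - (-(1 - c * ((n : ℝ) - 1 - i)) * (2 - i + c * i * (i - 1) / 2)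
        + -(1 - c * i) * (2 - (n - i) + c * (n - i) * (n - i - 1) / 2))
      = c * (c * ((n : ℝ) - 1) - 2) * (2 * i - (n - 1)) ^ 2 / 8 := by
    field_simp
    ring
  nlinarith [mul_nonneg hW.le (sq_nonneg (2 * (i : ℝ) - (n - 1)))]

lemma normInf_inv_Ttilde_le (hc : 1 ≤ c) (hcn : 2 < c * ((n : ℝ) - 1)) :
    normInf (Ttilde n 2 (1 - c))⁻¹ ≤
      max (((n : ℝ) + 1) ^ 2 / 8 + (4 - (1 + c) * n) / (2 * c))
        (1 / c * ((n : ℝ) / 2 + 2 / (((n : ℝ) - 1) * c - 2))) := by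
  have hn := two_le_of_two_lt_mul_sub_one hc hcn
  rw [Matrix.inv_eq_right_inv (Ttilde_mul_green hn (wronskian_pos hc hcn).ne')]
  have : Nonempty (Fin n) := ⟨⟨0, by omega⟩⟩
  refine ciSup_le fun ⟨i, hi⟩ => ?_
  change ∑ j : Fin n, |green n c i j| ≤ _
  rw [Fin.sum_univ_eq_sum_range (fun j => |green n c i j|) n]
  obtain rfl | hi0 := Nat.eq_zero_or_pos i
  · exact (sum_abs_green_zero hc hcn).le.trans (le_max_right _ _)
  obtain rfl | hin := eq_or_ne i (n - 1)
  · exact (sum_abs_green_last hc hcn).le.trans (le_max_right _ _)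
  · exact (sum_abs_green_le_of_interior hc hcn hi0 (by omega)).trans (le_max_left _ _)

end green

theorem stmt11 (n : ℕ) (hn : 3 < n) (bt : ℝ) (hbt : bt ≤ 0) :
    normInf ((Ttilde n 2 bt)⁻¹) ≤
      max (((n : ℝ) + 1) ^ 2 / 8 + (4 - (2 + |bt|) * (n : ℝ)) / (2 * (1 + |bt|)))
        ((1 / (1 + |bt|)) * ((n : ℝ) / 2 + 2 / (((n : ℝ) - 1) * (1 + |bt|) - 2))) := by
  have hc : 1 ≤ 1 + |bt| := le_add_of_nonneg_right (abs_nonneg bt)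
  have hcn : 2 < (1 + |bt|) * ((n : ℝ) - 1) := by
    have : (4 : ℝ) ≤ n := by exact_mod_cast hn
    nlinarith
  have hbt' : 1 - (1 + |bt|) = bt := by rw [abs_of_nonpos hbt]; ring
  have h := normInf_inv_Ttilde_le hc hcn
  rw [hbt'] at h
  convert h using 4
  ring
end

section
/- Let n > 3 be an integer and b̃ ∈ ℝ with 0 < b̃ < (n−3)/(n−1), and set γ = (2−b̃)/(1−b̃). Then T̃ₙ(2, b̃) is invertible and ‖T̃ₙ(2, b̃)⁻¹‖∞ ≤ max{ n(γ−1)/2 + (γ−1)²(γ+1)/(n+1−2γ) , (n+1)²/8 − γ·((n+1)/2 − γ) }. -/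
open Matrix BigOperators Finset

/-!
Put `a = 1 / (1 - b̃)`, so that `γ = a + 1` and `b̃ < (n - 3) / (n - 1)` means `2a < n - 1`.
The sequences `k ↦ a - k` and `k ↦ a - (n - 1 - k)` solve the interior rows of `T̃ₙ(2, b̃)` and
satisfy the first and the last row respectively, with Wronskian `n - 1 - 2a`; hence the inverse
is the discrete Green's function `(a - min i j) (a - (n - 1 - max i j)) / (n - 1 - 2a)`.
Its absolute row sums reduce to sums `∑_{k < q} |a - k|`, which are exact quadratics for
`q ≤ a + 1` and are bounded by the midpoint rule in general. The resulting polynomial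
inequality gives the first term of the maximum for rows within distance `a` of an end of the
matrix, and the second term for the other rows.
-/

lemma sum_Ttilde_mul (n : ℕ) (b bt : ℝ) (F : ℝ → ℝ) (i : Fin n) :
    ∑ j : Fin n, Ttilde n b bt i j * F j =
      (if (i : ℕ) = 0 ∨ (i : ℕ) = n - 1 then bt else b) * F i
        - (if (i : ℕ) = 0 then 0 else F ((i : ℝ) - 1))
        - (if (i : ℕ) = n - 1 then 0 else F ((i : ℝ) + 1)) := by
  obtain ⟨i, hi⟩ := i
  set d := if i = 0 ∨ i = n - 1 then bt else b
  have hrow : ∀ j : ℕ, (if i = j then d else if i + 1 = j ∨ j + 1 = i then (-1 : ℝ) else 0) * F j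
      = (if j = i then d * F j else 0) - (if j + 1 = i then F j else 0)
        - (if j = i + 1 then F j else 0) := by
    intro j
    split_ifs <;> first | omega | ring
  refine (Fin.sum_univ_eq_sum_range (fun j : ℕ =>
    (if i = j then d else if i + 1 = j ∨ j + 1 = i then (-1 : ℝ) else 0) * F j) n).trans ?_
  simp only [hrow, sum_sub_distrib, sum_ite_eq', mem_range, hi, if_true]
  congr 1
  · congr 1
    rcases i with _ | p
    · simp
    · simp [show p < n by omega]
  · by_cases h : i = n - 1
    · simp [h, show ¬ n - 1 + 1 < n by omega]
    · simp [h, show i + 1 < n by omega]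

noncomputable def greenFun (n : ℕ) (a x y : ℝ) : ℝ :=
  (a - min x y) * (a - (n - 1 - max x y))

noncomputable def greenMatrix (n : ℕ) (a : ℝ) : Matrix (Fin n) (Fin n) ℝ :=
  ((n : ℝ) - 1 - 2 * a)⁻¹ • of fun i j : Fin n => greenFun n a i j

lemma greenFun_of_le {n : ℕ} {a x y : ℝ} (h : x ≤ y) :
    greenFun n a x y = (a - x) * (a - (n - 1 - y)) := by
  rw [greenFun, min_eq_left h, max_eq_right h]

lemma greenFun_of_ge {n : ℕ} {a x y : ℝ} (h : y ≤ x) :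
    greenFun n a x y = (a - y) * (a - (n - 1 - x)) := by
  rw [greenFun, min_eq_right h, max_eq_left h]

lemma Ttilde_mul_greenFun {n : ℕ} (hn : 2 ≤ n) {a : ℝ} (ha : a ≠ 0) :
    Ttilde n 2 (1 - a⁻¹) * of (fun i j : Fin n => greenFun n a i j)
      = ((n : ℝ) - 1 - 2 * a) • 1 := by
  ext ⟨i, hi⟩ ⟨k, hk⟩
  refine (sum_Ttilde_mul n 2 _ (fun x => greenFun n a x k) ⟨i, hi⟩).trans ?_
  have hk' : (k : ℝ) + 1 ≤ n := by exact_mod_cast hk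
  have hcast : ((n - 1 : ℕ) : ℝ) = n - 1 := Nat.cast_pred (by omega)
  simp only [Matrix.smul_apply, one_apply, Fin.mk.injEq, smul_eq_mul, mul_ite, mul_one, mul_zero]
  obtain rfl | rfl | ⟨hi0, hin⟩ : i = 0 ∨ i = n - 1 ∨ i ≠ 0 ∧ i ≠ n - 1 := by omega
  · simp only [true_or, if_true, show 0 ≠ n - 1 by omega, if_false, Nat.cast_zero]
    obtain rfl | hk0 := eq_or_ne k 0
    · rw [if_pos rfl, Nat.cast_zero, greenFun_of_le le_rfl, greenFun_of_ge (by norm_num)]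
      field_simp
      ring
    · have hk1 : (1 : ℝ) ≤ k := by exact_mod_cast Nat.one_le_iff_ne_zero.2 hk0
      rw [if_neg (Ne.symm hk0), greenFun_of_le (by linarith), greenFun_of_le (by linarith)]
      field_simp
      ring
  · simp only [or_true, if_true, show n - 1 ≠ 0 by omega, if_false, hcast]
    obtain rfl | hkn := eq_or_ne k (n - 1)
    · rw [if_pos rfl, hcast, greenFun_of_le le_rfl, greenFun_of_le (by linarith)]
      field_simp
      ring
    · have hk1 : (k : ℝ) + 2 ≤ n := by exact_mod_cast (show k + 2 ≤ n by omega)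
      rw [if_neg (Ne.symm hkn), greenFun_of_ge (by linarith), greenFun_of_ge (by linarith)]
      field_simp
      ring
  · have hi1 : (1 : ℝ) ≤ i := by exact_mod_cast Nat.one_le_iff_ne_zero.2 hi0
    simp only [hi0, hin, or_self, if_false]
    obtain hik | rfl | hik := lt_trichotomy i k
    · have hik' : (i : ℝ) + 1 ≤ k := by exact_mod_cast hik
      rw [if_neg hik.ne, greenFun_of_le (by linarith), greenFun_of_le (by linarith),
        greenFun_of_le (by linarith)]
      ring
    · rw [if_pos rfl, greenFun_of_le le_rfl, greenFun_of_le (by linarith),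
        greenFun_of_ge (by linarith)]
      ring
    · have hik' : (k : ℝ) + 1 ≤ i := by exact_mod_cast hik
      rw [if_neg hik.ne', greenFun_of_ge (by linarith), greenFun_of_ge (by linarith),
        greenFun_of_ge (by linarith)]
      ring

theorem Ttilde_mul_greenMatrix {n : ℕ} (hn : 2 ≤ n) {a : ℝ} (ha : a ≠ 0)
    (hN : (n : ℝ) - 1 - 2 * a ≠ 0) :
    Ttilde n 2 (1 - a⁻¹) * greenMatrix n a = 1 := by
  rw [greenMatrix, mul_smul_comm, Ttilde_mul_greenFun hn ha, smul_smul, inv_mul_cancel₀ hN,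
    one_smul]

noncomputable def sumAbsSub (a : ℝ) (q : ℕ) : ℝ := ∑ k ∈ range q, |a - k|

lemma sumAbsSub_succ (a : ℝ) (q : ℕ) : sumAbsSub a (q + 1) = sumAbsSub a q + |a - q| :=
  sum_range_succ _ _

lemma sumAbsSub_of_le {a : ℝ} {q : ℕ} (hq : (q : ℝ) ≤ a + 1) :
    sumAbsSub a q = q * a - q * (q - 1) / 2 := by
  induction q with
  | zero => simp [sumAbsSub]
  | succ q ih =>
    push_cast at hq
    rw [sumAbsSub_succ, ih (by linarith), abs_of_nonneg (by linarith)]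
    push_cast
    ring

/-- The midpoint rule for the convex function `s ↦ |a - s|`: the right-hand side is
`∫_{-1/2}^{q - 1/2} |a - s| ds`. -/
lemma sumAbsSub_le (a : ℝ) (q : ℕ) :
    sumAbsSub a q ≤ ((a + 1 / 2) ^ 2 + (q - a - 1 / 2) ^ 2) / 2 := by
  induction q with
  | zero => simp only [sumAbsSub, range_zero, sum_empty, CharP.cast_eq_zero]; positivity
  | succ q ih =>
    rcases le_or_gt a q with hqa | hqa
    · rw [sumAbsSub_succ, abs_of_nonpos (by linarith)]
      push_cast
      linarith
    · rw [sumAbsSub_of_le (by push_cast; linarith)]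
      push_cast
      linarith [sq_nonneg ((q : ℝ) + 1 - a - 1 / 2)]

noncomputable def absRowSum (a : ℝ) (x y : ℕ) : ℝ :=
  ∑ k ∈ range (x + 1 + y), |greenFun (x + 1 + y) a x k|

lemma absRowSum_eq (a : ℝ) (x y : ℕ) :
    absRowSum a x y
      = |a - y| * sumAbsSub a x + |a - x| * |a - y| + |a - x| * sumAbsSub a y := by
  have hleft : ∀ k ∈ range x, |greenFun (x + 1 + y) a x k| = |a - y| * |a - k| := by
    intro k hk
    have hkx : (k : ℝ) ≤ x := by exact_mod_cast (mem_range.1 hk).le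
    rw [greenFun_of_ge hkx, abs_mul, mul_comm]
    push_cast
    ring_nf
  have hright : ∀ k ∈ range y,
      |greenFun (x + 1 + y) a x ((x + 1 + k : ℕ) : ℝ)| = |a - x| * |a - (y - 1 - k : ℕ)| := by
    intro k hk
    have hky : k < y := mem_range.1 hk
    rw [greenFun_of_le (by push_cast; linarith), abs_mul, Nat.cast_sub (by omega),
      Nat.cast_sub (by omega)]
    push_cast
    ring_nf
  rw [absRowSum, sumAbsSub, sumAbsSub, sum_range_add, sum_range_succ, sum_congr rfl hleft,
    sum_congr rfl hright, ← mul_sum, ← mul_sum, sum_range_reflect (fun k => |a - k|) y,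
    greenFun_of_le le_rfl, abs_mul]
  push_cast
  ring_nf

lemma absRowSum_comm (a : ℝ) (x y : ℕ) : absRowSum a x y = absRowSum a y x := by
  rw [absRowSum_eq, absRowSum_eq]
  ring

lemma absRowSum_le_of_le {a : ℝ} {x y : ℕ} (ha : 1 / 4 ≤ a) (hxa : (x : ℝ) ≤ a)
    (hxy : 2 * a < x + y) :
    absRowSum a x y ≤ (x + y + 1) * a * (x + y - 2 * a) / 2 + a ^ 2 * (a + 2) := by
  have hx : (0 : ℝ) ≤ x := x.cast_nonneg
  have hSy := sumAbsSub_le a y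
  rw [absRowSum_eq, sumAbsSub_of_le (by linarith), abs_of_nonpos (by linarith : a - y ≤ 0),
    abs_of_nonneg (by linarith : 0 ≤ a - x)]
  have hd : (0 : ℝ) ≤ x + y - 2 * a := by linarith
  linarith [mul_le_mul_of_nonneg_left hSy (by linarith : 0 ≤ a - x),
    mul_nonneg (mul_nonneg hd hx) (by linarith : (0 : ℝ) ≤ 2 * a - x),
    mul_nonneg (mul_nonneg hd hd) hx, mul_nonneg (sq_nonneg a) hx,
    mul_nonneg hx (by linarith : (0 : ℝ) ≤ 2 * a + 1 / 2),
    mul_nonneg (by linarith : (0 : ℝ) ≤ a) (by linarith : (0 : ℝ) ≤ 2 * a - 1 / 2)]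

lemma absRowSum_le_of_lt {a : ℝ} {x y : ℕ} (ha : -1 / 2 ≤ a) (hx : a < x) (hy : a < y) :
    absRowSum a x y ≤ (x + y - 2 * a) * ((x + y - 2 * a) ^ 2 / 4 + (a + 1) ^ 2) / 2 := by
  have hd : (0 : ℝ) ≤ x + y - 2 * a := by linarith
  rw [absRowSum_eq, abs_of_neg (by linarith : a - y < 0), abs_of_neg (by linarith : a - x < 0)]
  linarith [mul_le_mul_of_nonneg_left (sumAbsSub_le a x) (by linarith : (0 : ℝ) ≤ y - a),
    mul_le_mul_of_nonneg_left (sumAbsSub_le a y) (by linarith : (0 : ℝ) ≤ x - a),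
    mul_nonneg hd (sq_nonneg ((x : ℝ) - y)), mul_nonneg hd (by linarith : (0 : ℝ) ≤ a + 1 / 2)]

lemma sum_abs_greenMatrix_row {n : ℕ} {a : ℝ} (hN : 2 * a < n - 1) (i : Fin n) :
    ∑ k, |greenMatrix n a i k| = absRowSum a i (n - 1 - i) / (n - 1 - 2 * a) := by
  have hsize : (i : ℕ) + 1 + (n - 1 - i) = n := by omega
  simp only [greenMatrix, Matrix.smul_apply, of_apply, smul_eq_mul, abs_mul, abs_inv,
    abs_of_pos (by linarith : (0 : ℝ) < n - 1 - 2 * a), ← mul_sum]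
  rw [Fin.sum_univ_eq_sum_range (fun k => |greenFun n a i k|), absRowSum, hsize, inv_mul_eq_div]

lemma sum_abs_greenMatrix_row_le {n : ℕ} {a : ℝ} (ha : 1 / 4 ≤ a) (hN : 2 * a < n - 1)
    (i : Fin n) :
    ∑ k, |greenMatrix n a i k|
      ≤ max (n * a / 2 + a ^ 2 * (a + 2) / (n - 1 - 2 * a))
          ((n - 1 - 2 * a) ^ 2 / 8 + (a + 1) ^ 2 / 2) := by
  set y := n - 1 - (i : ℕ) with hy
  have hsize : ((i : ℕ) : ℝ) + y = n - 1 := by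
    rw [hy, Nat.cast_sub (by omega), Nat.cast_pred (by omega)]
    ring
  have hN' : 0 < (n : ℝ) - 1 - 2 * a := by linarith
  rw [sum_abs_greenMatrix_row hN, div_le_iff₀ hN']
  have hboundary : (n * a / 2 + a ^ 2 * (a + 2) / (n - 1 - 2 * a)) * (n - 1 - 2 * a)
      = n * a * (n - 1 - 2 * a) / 2 + a ^ 2 * (a + 2) := by
    rw [add_mul, div_mul_cancel₀ _ hN'.ne']
    ring
  rcases le_or_gt ((i : ℕ) : ℝ) a with hia | hia
  · calc absRowSum a i y ≤ (i + y + 1) * a * (i + y - 2 * a) / 2 + a ^ 2 * (a + 2) :=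
          absRowSum_le_of_le ha hia (by linarith)
      _ = (n * a / 2 + a ^ 2 * (a + 2) / (n - 1 - 2 * a)) * (n - 1 - 2 * a) := by
          rw [hboundary, hsize]; ring
      _ ≤ _ := mul_le_mul_of_nonneg_right (le_max_left _ _) hN'.le
  rcases le_or_gt (y : ℝ) a with hya | hya
  · calc absRowSum a i y = absRowSum a y i := absRowSum_comm a i y
      _ ≤ (y + i + 1) * a * (y + i - 2 * a) / 2 + a ^ 2 * (a + 2) :=
          absRowSum_le_of_le ha hya (by linarith)
      _ = (n * a / 2 + a ^ 2 * (a + 2) / (n - 1 - 2 * a)) * (n - 1 - 2 * a) := by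
          rw [hboundary, add_comm (y : ℝ), hsize]; ring
      _ ≤ _ := mul_le_mul_of_nonneg_right (le_max_left _ _) hN'.le
  · calc absRowSum a i y ≤ (i + y - 2 * a) * ((i + y - 2 * a) ^ 2 / 4 + (a + 1) ^ 2) / 2 :=
          absRowSum_le_of_lt (by linarith) hia hya
      _ = ((n - 1 - 2 * a) ^ 2 / 8 + (a + 1) ^ 2 / 2) * (n - 1 - 2 * a) := by
          rw [hsize]; ring
      _ ≤ _ := mul_le_mul_of_nonneg_right (le_max_right _ _) hN'.le

lemma normInf_greenMatrix_le {n : ℕ} {a : ℝ} (ha : 1 / 4 ≤ a) (hN : 2 * a < n - 1) :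
    normInf (greenMatrix n a)
      ≤ max (n * a / 2 + a ^ 2 * (a + 2) / (n - 1 - 2 * a))
          ((n - 1 - 2 * a) ^ 2 / 8 + (a + 1) ^ 2 / 2) := by
  have : Nonempty (Fin n) := ⟨⟨0, by exact_mod_cast (by linarith : (0 : ℝ) < n)⟩⟩
  exact ciSup_le (sum_abs_greenMatrix_row_le ha hN)

theorem stmt15 (n : ℕ) (hn : 3 < n) (bt : ℝ)
    (hbt1 : 0 < bt) (hbt2 : bt < ((n : ℝ) - 3) / ((n : ℝ) - 1)) :
    IsUnit (Ttilde n 2 bt) ∧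
    normInf ((Ttilde n 2 bt)⁻¹) ≤
      max ((n : ℝ) * ((2 - bt) / (1 - bt) - 1) / 2
            + ((2 - bt) / (1 - bt) - 1) ^ 2 * ((2 - bt) / (1 - bt) + 1)
                / ((n : ℝ) + 1 - 2 * ((2 - bt) / (1 - bt))))
        (((n : ℝ) + 1) ^ 2 / 8
            - ((2 - bt) / (1 - bt)) * (((n : ℝ) + 1) / 2 - (2 - bt) / (1 - bt))) := by
  have hn' : (4 : ℝ) ≤ n := by exact_mod_cast hn
  have hbt : bt * (n - 1) < n - 3 := (lt_div_iff₀ (by linarith)).1 hbt2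
  set a := (1 - bt)⁻¹ with ha_def
  have hbt_lt : 0 < 1 - bt := by nlinarith
  have ha : 1 < a := (one_lt_inv₀ hbt_lt).2 (by linarith)
  have hN : 2 * a < n - 1 := by
    rw [ha_def, ← div_eq_mul_inv, div_lt_iff₀ hbt_lt]
    linarith
  have hγ : (2 - bt) / (1 - bt) = a + 1 := by
    rw [ha_def]
    field_simp
    ring
  have hinv : Ttilde n 2 bt * greenMatrix n a = 1 := by
    have hbt_eq : bt = 1 - a⁻¹ := by rw [ha_def, inv_inv]; ring
    rw [hbt_eq]
    exact Ttilde_mul_greenMatrix (by omega) (zero_lt_one.trans ha).ne' (by linarith)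
  refine ⟨(isUnit_iff_isUnit_det _).2 (isUnit_det_of_right_inverse hinv), ?_⟩
  rw [inv_eq_right_inv hinv, hγ]
  convert normInf_greenMatrix_le (by linarith) hN using 2 <;> ring
end
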